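/- Let C = {x,y,z} be a set of three clocks. Define A = {v ∈ ℝ≥0^C : v(z) = 0 and v(x) = v(y)} and B = {v ∈ ℝ≥0^C : v(y) ≥ 2, v(z) ≤ 2, v(y) − v(x) ≤ 1 and v(x) − v(z) ≤ 1}. Then A ∩ B = ∅, and there is no set I of the form I = {v ∈ ℝ≥0^C : v(x') − v(y') ≺ k} for some x',y' ∈ C0 and bound (k,≺) such that A ⊆ I and I ∩ B = ∅. In other words, the pair of disjoint zones (A,B) admits no interpolant defined by a single atomic constraint. -/

import Mathlib

/-- A bound `(k, ≺)`: an integer `k` together with a strictness flag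
(`true` codes `≤`, `false` codes `<`), ordered lexicographically,
so that `(k, <) < (k, ≤) < (k+1, <)`. -/
abbrev Bnd : Type := Lex (ℤ × Bool)

/-- Addition of bounds: `(k,≺) + (k',≺')` is `(k+k', ≺'')` where `≺''` is `≤`
iff both `≺` and `≺'` are `≤`. -/
instance : Add Bnd :=
  ⟨fun a b => toLex ((ofLex a).1 + (ofLex b).1, (ofLex a).2 && (ofLex b).2)⟩

/-- The zero bound is `(0, ≤)`. -/
instance : Zero Bnd := ⟨toLex (0, true)⟩

instance : AddCommMonoid Bnd where
  toAdd := instAddBnd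
  toZero := instZeroBnd
  nsmul := nsmulRec
  add_assoc a b c := by
    change toLex (((ofLex a).1 + (ofLex b).1) + (ofLex c).1,
        (((ofLex a).2 && (ofLex b).2) && (ofLex c).2)) =
      toLex ((ofLex a).1 + ((ofLex b).1 + (ofLex c).1),
        ((ofLex a).2 && ((ofLex b).2 && (ofLex c).2)))
    rw [add_assoc, Bool.and_assoc]
  zero_add a := by
    change toLex ((0 : ℤ) + (ofLex a).1, (true && (ofLex a).2)) = a
    simp
  add_zero a := by
    change toLex ((ofLex a).1 + (0 : ℤ), ((ofLex a).2 && true)) = a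
    simp
  add_comm a b := by
    change toLex ((ofLex a).1 + (ofLex b).1, ((ofLex a).2 && (ofLex b).2)) =
      toLex ((ofLex b).1 + (ofLex a).1, ((ofLex b).2 && (ofLex a).2))
    rw [add_comm, Bool.and_comm]

/-- `satB d b` says that `d ≺ k`, where `b = (k, ≺)`. -/
def satB (d : ℝ) (b : Bnd) : Prop :=
  if (ofLex b).2 then d ≤ ((ofLex b).1 : ℝ) else d < ((ofLex b).1 : ℝ)


/-- Extended valuation on `C0 = C ∪ {0}`: the special clock `0` is `none`. -/
def val0 {C : Type*} (v : C → ℝ) : Option C → ℝ := fun x => x.elim 0 v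

/-- The three clocks `x`, `y`, `z` are `0`, `1`, `2 : Fin 3`.  The zone `A`:
`z = 0 ∧ x = y`. -/
def zoneA : Set (Fin 3 → ℝ) :=
  {v | (∀ c, 0 ≤ v c) ∧ v 2 = 0 ∧ v 0 = v 1}

/-- The zone `B`: `y ≥ 2 ∧ z ≤ 2 ∧ y − x ≤ 1 ∧ x − z ≤ 1`. -/
def zoneB : Set (Fin 3 → ℝ) :=
  {v | (∀ c, 0 ≤ v c) ∧ 2 ≤ v 1 ∧ v 2 ≤ 2 ∧ v 1 - v 0 ≤ 1 ∧ v 0 - v 2 ≤ 1}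

/-! Every interpolant given by one constraint `x' - y' ≺ k` contains the origin (which lies in
`A`), so `0 ≺ k`. Hence no valuation of `B` may make `x' - y'` nonpositive; for each pair of
clocks, one of the two valuations `(1,2,0)`, `(2,2,1)` of `B` does so, unless `x' ∈ {x, y}` and
`y' ∈ {0, z}`. In those remaining cases `x' - y'` takes every value `t ≥ 0` on the valuations
`(t,t,0)` of `A`, so it cannot be bounded by `k`. -/

lemma satB_of_le {d d' : ℝ} {b : Bnd} (h : d' ≤ d) (hb : satB d b) : satB d' b := by
  unfold satB at *
  split at hb <;> simp_all <;> linarith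

lemma exists_nonneg_not_satB (b : Bnd) : ∃ t : ℝ, 0 ≤ t ∧ ¬ satB t b := by
  refine ⟨max (ofLex b).1 0 + 1, by positivity, ?_⟩
  have := le_max_left ((ofLex b).1 : ℝ) 0
  unfold satB
  split <;> push_cast <;> linarith

@[simp]
lemma val0_zero {C : Type*} (o : Option C) : val0 (0 : C → ℝ) o = 0 := by
  cases o <;> rfl

lemma zero_mem_zoneA : (0 : Fin 3 → ℝ) ∈ zoneA :=
  ⟨fun _ => le_rfl, rfl, rfl⟩

lemma diag_mem_zoneA {t : ℝ} (ht : 0 ≤ t) : ![t, t, 0] ∈ zoneA := by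
  refine ⟨fun c => ?_, rfl, rfl⟩
  fin_cases c <;> simp [ht]

lemma zoneA_inter_zoneB : zoneA ∩ zoneB = ∅ :=
  Set.eq_empty_of_forall_notMem fun _ ⟨⟨_, hz, hxy⟩, _, hy, _, hyx, hxz⟩ => by linarith

lemma mem_zoneB_120 : ![1, 2, 0] ∈ zoneB := by
  refine ⟨fun c => ?_, ?_, ?_, ?_, ?_⟩ <;> try fin_cases c
  all_goals simp <;> norm_num

lemma mem_zoneB_221 : ![2, 2, 1] ∈ zoneB := by
  refine ⟨fun c => ?_, ?_, ?_, ?_, ?_⟩ <;> try fin_cases c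
  all_goals simp <;> norm_num

lemma exists_mem_zoneB_sub_nonpos_or_forall_mem_zoneA_sub_eq (x' y' : Option (Fin 3)) :
    (∃ w ∈ zoneB, val0 w x' - val0 w y' ≤ 0) ∨
      ∀ t : ℝ, 0 ≤ t → ∃ v ∈ zoneA, val0 v x' - val0 v y' = t := by
  rcases x' with _ | x' <;> rcases y' with _ | y'
  all_goals try fin_cases x'
  all_goals try fin_cases y'
  all_goals first
    | (refine .inl ⟨_, mem_zoneB_120, ?_⟩; simp [val0]; done)
    | (refine .inl ⟨_, mem_zoneB_221, ?_⟩; simp [val0]; done)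
    | exact .inr fun t ht => ⟨_, diag_mem_zoneA ht, by simp [val0]⟩

/-- The zones `A` and `B` are disjoint, but no set defined by a single atomic
clock constraint `x' − y' ≺ k` (with `x', y' ∈ C ∪ {0}`) separates them:
the pair `(A, B)` admits no simple interpolant. -/
theorem no_simple_interpolant :
    zoneA ∩ zoneB = ∅ ∧
      ¬ ∃ (x' y' : Option (Fin 3)) (b : Bnd),
          zoneA ⊆ {v | (∀ c, 0 ≤ v c) ∧ satB (val0 v x' - val0 v y') b} ∧
          {v : Fin 3 → ℝ | (∀ c, 0 ≤ v c) ∧ satB (val0 v x' - val0 v y') b} ∩ zoneB = ∅ := by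
  refine ⟨zoneA_inter_zoneB, ?_⟩
  rintro ⟨x', y', b, hA, hB⟩
  have h0 : satB 0 b := by simpa using (hA zero_mem_zoneA).2
  rcases exists_mem_zoneB_sub_nonpos_or_forall_mem_zoneA_sub_eq x' y' with
    ⟨w, hw, hle⟩ | hdiag
  · exact Set.eq_empty_iff_forall_notMem.mp hB w ⟨⟨hw.1, satB_of_le hle h0⟩, hw⟩
  · obtain ⟨t, ht, hnot⟩ := exists_nonneg_not_satB b
    obtain ⟨v, hv, rfl⟩ := hdiag t ht
    exact hnot (hA hv).2
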